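/- arXiv:1606.06581 — 3 statements merged into one kernel-verified Lean document; each statement's English description precedes it below -/
import Mathlib

section
/- (Adding an apex.) Let G = (V,E) be a finite simple graph with edge weights w_e (e ∈ E) and vertex weights z_v (v ∈ V) in a commutative ring. Let G' be the graph obtained from G by adding one new vertex a (the apex) joined to every vertex v ∈ V by an edge of weight z_v. Then the multivariate forest polynomial of G' satisfies F(G') = Σ_{A ∈ 𝔽(G)} ( ∏_{e ∈ A} w_e ) · ∏_{T ∈ c(A)} ( 1 + Σ_{v ∈ T} z_v ). -/
open scoped Classical

/-- An edge subset is acyclic (a forest) if the spanning subgraph `(V, A)` has no cycle. -/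
def IsForestEdgeSet {V : Type*} (A : Finset (Sym2 V)) : Prop :=
  (SimpleGraph.fromEdgeSet (A : Set (Sym2 V))).IsAcyclic

/-- The collection `c(A)` of vertex sets of the connected components of a graph `H` on a
finite vertex set (including singleton components). -/
noncomputable def componentSets {V : Type*} [Fintype V] (H : SimpleGraph V) :
    Finset (Finset V) :=
  Finset.univ.image (fun v => Finset.univ.filter (fun u => H.Reachable v u))

/-- The apex graph `G'` of `G`: a new vertex `a = none` is joined to every vertex of `G`. -/
def apexGraph {V : Type*} (G : SimpleGraph V) : SimpleGraph (Option V) :=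
  SimpleGraph.fromRel (fun x y =>
    match x, y with
    | some u, some v => G.Adj u v
    | none, some _ => True
    | _, _ => False)

/-!
A forest `A'` of the apex graph splits into its edges `A` inside `G` and the set `S` of vertices
joined to the apex, and `A'` is acyclic iff `A` is a forest and `S` meets every component of `A`
in at most one vertex: two apex edges into one component close a cycle with the path joining
their ends, and a cycle through the apex leaves and re-enters it through a single component.
Choosing `S` independently in each component `T` (empty, or one vertex `v ∈ T`) turns the sum
over `S` of `∏_{v ∈ S} z v` into `∏_T (1 + ∑_{v ∈ T} z v)`.
-/

namespace Finset

variable {α β : Type*} [DecidableEq α]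

theorem sum_powerset_union_of_disjoint [AddCommMonoid β] {s t : Finset α} (hst : Disjoint s t)
    (f : Finset α → β) :
    ∑ S ∈ (s ∪ t).powerset, f S = ∑ S₁ ∈ s.powerset, ∑ S₂ ∈ t.powerset, f (S₁ ∪ S₂) := by
  induction s using Finset.induction_on generalizing f with
  | empty => simp
  | insert a s ha ih =>
    have hst' := disjoint_insert_left.mp hst
    rw [insert_union, sum_powerset_insert (by simp [ha, hst'.1]), sum_powerset_insert ha,
      ih hst'.2, ih hst'.2]
    simp only [insert_union]

theorem sum_filter_powerset_card_le_one [AddCommMonoid β] (s : Finset α) (f : Finset α → β) :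
    ∑ S ∈ s.powerset with #S ≤ 1, f S = f ∅ + ∑ a ∈ s, f {a} := by
  have hsplit : {S ∈ s.powerset | #S ≤ 1} = s.powersetCard 0 ∪ s.powersetCard 1 := by
    ext S
    simp only [mem_filter, mem_powerset, mem_union, mem_powersetCard,
      Nat.le_one_iff_eq_zero_or_eq_one, and_or_left]
  rw [hsplit, sum_union (s.pairwise_disjoint_powersetCard zero_ne_one), powersetCard_zero,
    powersetCard_one, sum_singleton, sum_map]
  rfl

theorem prod_one_add_sum_eq_sum_filter_powerset {R : Type*} [CommSemiring R]
    {P : Finset (Finset α)} (hP : (P : Set (Finset α)).PairwiseDisjoint id) (z : α → R) :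
    ∏ T ∈ P, (1 + ∑ a ∈ T, z a) =
      ∑ S ∈ (P.sup id).powerset with ∀ T ∈ P, #(S ∩ T) ≤ 1, ∏ a ∈ S, z a := by
  induction P using Finset.induction_on with
  | empty => simp
  | insert T P hT ih =>
    have hTP : ∀ T' ∈ P, Disjoint T T' := fun T' hT' =>
      hP (mem_insert_self T P) (mem_insert_of_mem hT') (ne_of_mem_of_not_mem hT' hT).symm
    have hTU : Disjoint T (P.sup id) := Finset.disjoint_sup_right.mpr hTP
    have hone :
        1 + ∑ a ∈ T, z a = ∑ S₁ ∈ T.powerset, if #S₁ ≤ 1 then ∏ a ∈ S₁, z a else 0 := by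
      rw [← sum_filter, sum_filter_powerset_card_le_one]
      simp
    rw [prod_insert hT, ih (hP.subset (by simp)), sup_insert, id, sup_eq_union, sum_filter,
      sum_filter, sum_powerset_union_of_disjoint hTU, hone, sum_mul_sum]
    refine sum_congr rfl fun S₁ hS₁ => sum_congr rfl fun S₂ hS₂ => ?_
    rw [mem_powerset] at hS₁ hS₂
    have hS₁S₂ : Disjoint S₁ S₂ := hTU.mono hS₁ hS₂
    have hT : (S₁ ∪ S₂) ∩ T = S₁ := by
      rw [union_inter_distrib_right, inter_eq_left.mpr hS₁,
        disjoint_iff_inter_eq_empty.mp (hTU.symm.mono_left hS₂), union_empty]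
    have hP' : ∀ T' ∈ P, (S₁ ∪ S₂) ∩ T' = S₂ ∩ T' := fun T' hT' => by
      rw [union_inter_distrib_right,
        disjoint_iff_inter_eq_empty.mp ((hTP T' hT').mono_left hS₁), empty_union]
    rw [ite_zero_mul_ite_zero, prod_union hS₁S₂]
    refine if_congr ?_ rfl rfl
    rw [forall_mem_insert, hT]
    exact and_congr_right' (forall₂_congr fun T' hT' => by rw [hP' T' hT'])

end Finset

open Finset in
theorem prod_one_add_sum_componentSets {V R : Type*} [Fintype V] [CommSemiring R]
    (H : SimpleGraph V) [DecidableRel H.Reachable] (z : V → R) :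
    ∏ T ∈ componentSets H, (1 + ∑ v ∈ T, z v) =
      ∑ S ∈ univ.powerset with ∀ u ∈ S, ∀ v ∈ S, H.Reachable u v → u = v, ∏ v ∈ S, z v := by
  have hdisj : (componentSets H : Set (Finset V)).PairwiseDisjoint id := by
    simp only [componentSets, coe_image, coe_univ, Set.image_univ]
    rintro _ ⟨v₁, rfl⟩ _ ⟨v₂, rfl⟩ hne
    refine disjoint_left.mpr fun u hu₁ hu₂ => hne ?_
    simp only [id, mem_filter, mem_univ, true_and] at hu₁ hu₂
    ext x
    simp only [mem_filter, mem_univ, true_and]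
    exact ⟨(hu₂.trans hu₁.symm).trans, (hu₁.trans hu₂.symm).trans⟩
  have hsup : (componentSets H).sup id = univ :=
    eq_univ_of_forall fun v => mem_sup.mpr ⟨_, mem_image_of_mem _ (mem_univ v), by simp⟩
  rw [prod_one_add_sum_eq_sum_filter_powerset hdisj, hsup]
  refine sum_congr (ext fun S => ?_) fun _ _ => rfl
  simp only [componentSets, forall_mem_image, mem_univ, forall_const, card_le_one, mem_inter,
    mem_filter, mem_powerset, subset_univ, true_and]
  constructor
  · exact fun h u hu v hv hreach => h u ⟨hu, .rfl⟩ v ⟨hv, hreach⟩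
  · exact fun h x u hu v hv => h u hu.1 v hv.1 (hu.2.symm.trans hv.2)

namespace SimpleGraph

variable {V : Type*}

theorem Walk.exists_map_comap_some_eq {H : SimpleGraph (Option V)} :
    ∀ {u v : V} (p : H.Walk (some u) (some v)), none ∉ p.support →
      ∃ q : (H.comap some).Walk u v, q.map (Hom.comap some H) = p
  | _, _, .nil, _ => ⟨.nil, rfl⟩
  | _, _, .cons (v := none) _ p, hp => absurd p.start_mem_support (by simp_all)
  | _, _, .cons (v := some _) h p, hp => by
      obtain ⟨q, rfl⟩ := exists_map_comap_some_eq p (by simp_all)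
      exact ⟨.cons h q, rfl⟩

theorem Walk.IsCycle.none_notMem_support {H : SimpleGraph (Option V)}
    (hS : ∀ u, H.Adj none (some u) → ∀ v, H.Adj none (some v) →
      (H.comap some).Reachable u v → u = v)
    {x : Option V} {c : H.Walk x x} (hc : c.IsCycle) : none ∉ c.support := by
  -- Started at the apex, the cycle reads `none → u ⋯ w → none` with a middle part avoiding
  -- `none`, so `w = u` by `hS` and the cycle would run along the edge `s(none, some u)` twice.
  intro hx
  have hrot := (isCycle_rotate hx).mpr hc
  obtain ⟨_ | u, h, q, hq⟩ : ∃ (x : Option V) (h : H.Adj none x) (q : H.Walk x none),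
      c.rotate none hx = .cons h q := by
    cases hc' : c.rotate none hx with
    | nil => exact absurd hc' hrot.ne_nil
    | cons h q => exact ⟨_, h, q, rfl⟩
  · exact H.irrefl h
  obtain ⟨hqpath, hqedge⟩ := (cons_isCycle_iff q h).mp (hq ▸ hrot)
  obtain ⟨_ | w, h', r, hr⟩ := exists_eq_cons_of_ne (Option.some_ne_none u).symm q.reverse
  · exact H.irrefl h'
  obtain ⟨hrpath, hnone⟩ := (cons_isPath_iff h' r).mp (hr ▸ hqpath.reverse)
  obtain ⟨r', -⟩ := r.exists_map_comap_some_eq hnone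
  obtain rfl : w = u := hS w h' u h ⟨r'⟩
  obtain rfl : r = .nil := eq_nil_iff_nil.mpr (isPath_iff_nil.mp hrpath)
  apply hqedge
  rw [← q.reverse_reverse, hr]
  simp

theorem isAcyclic_iff_comap_some {H : SimpleGraph (Option V)} :
    H.IsAcyclic ↔ (H.comap some).IsAcyclic ∧
      ∀ u, H.Adj none (some u) → ∀ v, H.Adj none (some v) →
        (H.comap some).Reachable u v → u = v := by
  have hinj : Function.Injective (Hom.comap some H) := Option.some_injective V
  constructor
  · refine fun hH => ⟨hH.comap _ hinj, fun u hu v hv ⟨p⟩ => ?_⟩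
    -- `s(none, some v)` and `none → some u ⋯ some v` are two paths from `none` to `some v`.
    let q : H.Walk (some u) (some v) := p.toPath.1.map (Hom.comap some H)
    have hq : (Walk.cons hu q).IsPath :=
      (p.toPath.2.map hinj).cons (by simp [Walk.support_map])
    have hsnd := hH.eq_snd_of_adj_start hq hv (Walk.cons hu q).end_mem_support
    rw [Walk.snd_cons] at hsnd
    exact (Option.some.inj hsnd).symm
  · rintro ⟨hK, hS⟩ x c hc
    obtain ⟨u, rfl⟩ : ∃ u, x = some u :=
      Option.ne_none_iff_exists'.mp fun h => hc.none_notMem_support hS (h ▸ c.start_mem_support)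
    obtain ⟨q, rfl⟩ := c.exists_map_comap_some_eq (hc.none_notMem_support hS)
    exact hK q ((Walk.isCycle_map_iff_of_injective hinj).mp hc)

end SimpleGraph

open Finset

section Apex

variable {V : Type*}

theorem apexGraph_adj_some_some (G : SimpleGraph V) (u v : V) :
    (apexGraph G).Adj (some u) (some v) ↔ G.Adj u v := by
  simp only [apexGraph, SimpleGraph.fromRel_adj, ne_eq, Option.some.injEq]
  exact ⟨fun ⟨_, h⟩ => h.elim id (·.symm), fun h => ⟨h.ne, .inl h⟩⟩

theorem apexGraph_adj_none_some (G : SimpleGraph V) (v : V) : (apexGraph G).Adj none (some v) := by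
  simp [apexGraph]

theorem Sym2.map_some_ne_mk_none (e : Sym2 V) (x : Option V) : e.map some ≠ s(none, x) := by
  intro h
  have hnone : none ∈ e.map some := h ▸ Sym2.mem_mk_left none x
  simp [Sym2.mem_map] at hnone

theorem Sym2.mk_none_some_injective :
    Function.Injective fun v : V => s((none : Option V), some v) :=
  fun _ _ h => Option.some.inj (Sym2.congr_right.mp h)

noncomputable def apexEdgeSet (A : Finset (Sym2 V)) (S : Finset V) : Finset (Sym2 (Option V)) :=
  A.image (Sym2.map some) ∪ S.image fun v => s(none, some v)

section apexEdgeSet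

variable {A : Finset (Sym2 V)} {S : Finset V}

theorem map_some_mem_apexEdgeSet {e : Sym2 V} : e.map some ∈ apexEdgeSet A S ↔ e ∈ A := by
  simp [apexEdgeSet, (Sym2.map.injective (Option.some_injective V)).mem_finset_image,
    (Sym2.map_some_ne_mk_none e _).symm]

theorem mk_none_some_mem_apexEdgeSet {v : V} : s(none, some v) ∈ apexEdgeSet A S ↔ v ∈ S := by
  simp [apexEdgeSet, Sym2.map_some_ne_mk_none]

theorem apexEdgeSet_inj {A₂ : Finset (Sym2 V)} {S₂ : Finset V} :
    apexEdgeSet A S = apexEdgeSet A₂ S₂ ↔ A = A₂ ∧ S = S₂ := by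
  refine ⟨fun h => ⟨?_, ?_⟩, fun h => h.1 ▸ h.2 ▸ rfl⟩ <;> ext
  · rw [← map_some_mem_apexEdgeSet, h, map_some_mem_apexEdgeSet]
  · rw [← mk_none_some_mem_apexEdgeSet, h, mk_none_some_mem_apexEdgeSet]

theorem exists_apexEdgeSet_eq {A' : Finset (Sym2 (Option V))} (h : s(none, none) ∉ A') :
    ∃ A S, apexEdgeSet A S = A' := by
  refine ⟨A'.preimage _ (Sym2.map.injective (Option.some_injective V)).injOn,
    A'.preimage _ Sym2.mk_none_some_injective.injOn, ?_⟩
  ext e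
  induction e using Sym2.ind with | _ x y => ?_
  cases x <;> cases y
  · exact iff_of_false (by simp [apexEdgeSet, Sym2.map_some_ne_mk_none]) h
  · rw [mk_none_some_mem_apexEdgeSet, mem_preimage]
  · rw [Sym2.eq_swap, mk_none_some_mem_apexEdgeSet, mem_preimage]
  · rw [← Sym2.map_mk, map_some_mem_apexEdgeSet, mem_preimage]

theorem comap_some_fromEdgeSet_apexEdgeSet :
    (SimpleGraph.fromEdgeSet (apexEdgeSet A S : Set (Sym2 (Option V)))).comap some =
      SimpleGraph.fromEdgeSet (A : Set (Sym2 V)) := by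
  ext u v
  rw [SimpleGraph.comap_adj, SimpleGraph.fromEdgeSet_adj, SimpleGraph.fromEdgeSet_adj,
    ← Sym2.map_mk, Finset.mem_coe, map_some_mem_apexEdgeSet]
  simp

theorem isForestEdgeSet_apexEdgeSet_iff :
    IsForestEdgeSet (apexEdgeSet A S) ↔ IsForestEdgeSet A ∧
      ∀ u ∈ S, ∀ v ∈ S, (SimpleGraph.fromEdgeSet (A : Set (Sym2 V))).Reachable u v → u = v := by
  rw [IsForestEdgeSet, SimpleGraph.isAcyclic_iff_comap_some, comap_some_fromEdgeSet_apexEdgeSet]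
  simp [IsForestEdgeSet, mk_none_some_mem_apexEdgeSet]

theorem apexEdgeSet_subset_edgeFinset_apexGraph_iff [Fintype V] (G : SimpleGraph V) :
    apexEdgeSet A S ⊆ (apexGraph G).edgeFinset ↔ A ⊆ G.edgeFinset := by
  have hmap : ∀ e : Sym2 V, e.map some ∈ (apexGraph G).edgeSet ↔ e ∈ G.edgeSet :=
    Sym2.ind (apexGraph_adj_some_some G)
  rw [apexEdgeSet, union_subset_iff, image_subset_iff, image_subset_iff, subset_iff]
  simp only [SimpleGraph.mem_edgeFinset, hmap, SimpleGraph.mem_edgeSet, apexGraph_adj_none_some,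
    implies_true, and_true]

end apexEdgeSet

theorem prod_apexEdgeSet {M : Type*} [CommMonoid M] (A : Finset (Sym2 V)) (S : Finset V)
    (W : Sym2 (Option V) → M) :
    ∏ e ∈ apexEdgeSet A S, W e = (∏ e ∈ A, W (e.map some)) * ∏ v ∈ S, W s(none, some v) := by
  have hdisj : Disjoint (A.image (Sym2.map some)) (S.image fun v => s(none, some v)) := by
    simp only [disjoint_left, mem_image]
    rintro _ ⟨e, -, rfl⟩ ⟨v, -, h⟩
    exact Sym2.map_some_ne_mk_none e _ h.symm
  rw [apexEdgeSet, prod_union hdisj,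
    prod_image (Sym2.map.injective (Option.some_injective V)).injOn,
    prod_image Sym2.mk_none_some_injective.injOn]

theorem sum_forests_apexGraph [Fintype V] {M : Type*} [AddCommMonoid M] (G : SimpleGraph V)
    (f : Finset (Sym2 (Option V)) → M) :
    ∑ A' ∈ (apexGraph G).edgeFinset.powerset.filter IsForestEdgeSet, f A' =
      ∑ A ∈ G.edgeFinset.powerset.filter IsForestEdgeSet,
        ∑ S ∈ univ.powerset with
          ∀ u ∈ S, ∀ v ∈ S, (SimpleGraph.fromEdgeSet (A : Set (Sym2 V))).Reachable u v → u = v,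
          f (apexEdgeSet A S) := by
  rw [sum_sigma']
  symm
  refine sum_nbij (fun x : (_ : Finset (Sym2 V)) × Finset V => apexEdgeSet x.1 x.2) ?_ ?_ ?_
    fun _ _ => rfl
  · rintro ⟨A, S⟩ hAS
    simp only [mem_sigma, mem_filter, mem_powerset] at hAS ⊢
    exact ⟨(apexEdgeSet_subset_edgeFinset_apexGraph_iff G).mpr hAS.1.1,
      isForestEdgeSet_apexEdgeSet_iff.mpr ⟨hAS.1.2, hAS.2.2⟩⟩
  · rintro ⟨A, S⟩ - ⟨A₂, S₂⟩ - h
    obtain ⟨rfl, rfl⟩ := apexEdgeSet_inj.mp h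
    rfl
  · intro A' hA'
    simp only [coe_filter, mem_powerset, Set.mem_ofPred_eq] at hA'
    have hloop : s(none, none) ∉ A' := fun h => by simpa using hA'.1 h
    obtain ⟨A, S, rfl⟩ := exists_apexEdgeSet_eq hloop
    rw [apexEdgeSet_subset_edgeFinset_apexGraph_iff, isForestEdgeSet_apexEdgeSet_iff] at hA'
    exact ⟨⟨A, S⟩, by simpa using ⟨⟨hA'.1, hA'.2.1⟩, hA'.2.2⟩, rfl⟩

end Apex

/-- **Adding an apex.**  Let `G = (V, E)` be a finite simple graph with edge weights `w_e`
and vertex weights `z_v` in a commutative ring, and let `G'` be obtained from `G` by adding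
an apex `a` joined to each `v ∈ V` by an edge of weight `z_v` (the weight function `W` of `G'`
assigns `w e` to the edges of `G` and `z v` to the apex edge at `v`).  Then the multivariate
forest polynomial of `G'` satisfies
`F(G') = Σ_{A ∈ 𝔽(G)} (∏_{e ∈ A} w_e) · ∏_{T ∈ c(A)} (1 + Σ_{v ∈ T} z_v)`. -/
theorem forest_polynomial_apex {V : Type*} [Fintype V] {R : Type*} [CommRing R]
    (G : SimpleGraph V) (w : Sym2 V → R) (z : V → R)
    (W : Sym2 (Option V) → R)
    (hW1 : ∀ u v : V, W s(some u, some v) = w s(u, v))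
    (hW2 : ∀ v : V, W s(none, some v) = z v) :
    ∑ A' ∈ (apexGraph G).edgeFinset.powerset.filter IsForestEdgeSet, ∏ e ∈ A', W e
    = ∑ A ∈ G.edgeFinset.powerset.filter IsForestEdgeSet,
        (∏ e ∈ A, w e) *
          ∏ T ∈ componentSets (SimpleGraph.fromEdgeSet (A : Set (Sym2 V))),
            (1 + ∑ v ∈ T, z v) := by
  have hw : ∀ e : Sym2 V, W (e.map some) = w e := Sym2.ind hW1
  rw [sum_forests_apexGraph]
  refine sum_congr rfl fun A _ => ?_
  rw [prod_one_add_sum_componentSets, mul_sum]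
  exact sum_congr rfl fun S _ => by simp only [prod_apexEdgeSet, hw, hW2]
end

section
/- (The forest polynomial under a k-stretch.) Let G = (V,E) be a finite simple graph with m edges, let k ≥ 2 be an integer, and let G' be the k-stretch of G. Let w be a real number with (w+1)^k − w^k ≠ 0. Then F(G'; w) = ((w+1)^k − w^k)^m · F(G; w^k / ((w+1)^k − w^k)), where F(H;x) = Σ_{A ∈ 𝔽(H)} x^{|A|} is the univariate forest polynomial evaluated at x. -/
open scoped Classical

def stretchGraph {V : Type*} (G : SimpleGraph V) (k : ℕ) (p : G.edgeSet → V × V) :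
    SimpleGraph (V ⊕ (G.edgeSet × Fin (k - 1))) :=
  SimpleGraph.fromRel (fun x y =>
    match x, y with
    | Sum.inl u, Sum.inr (e, i) =>
        (i.val = 0 ∧ u = (p e).1) ∨ (i.val = k - 2 ∧ u = (p e).2)
    | Sum.inr (e, i), Sum.inr (f, j) => e = f ∧ i.val + 1 = j.val
    | _, _ => False)

/-!
A set `A` of edges of the stretch is acyclic iff the set `B` of edges of `G` whose whole path
lies in `A` is acyclic in `G`. One direction lifts a cycle of `B` to `A` path by path. For the
other, an edge of `A` on the path of `e` can only be closed into a cycle through `e`'s endpoints,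
since the interior vertices have degree two: if the path of `e` is incomplete, the interior
vertices between two gaps form a union of components; if it is complete, sending every interior
vertex to the endpoint it is joined to turns the cycle into one of `B` through `e`.

Grouping the subsets `A` by `B`, an edge of `B` contributes its whole path (weight `w ^ k`) and
an edge outside `B` any proper subset of its path (total weight `(w + 1) ^ k - w ^ k`), so the
forest polynomial of the stretch is `∑ (w ^ k) ^ |B| ((w + 1) ^ k - w ^ k) ^ (m - |B|)` over the
forests `B` of `G`.
-/

namespace SimpleGraph

variable {V W : Type*} {G : SimpleGraph V} {H : SimpleGraph W}

lemma Reachable.lift (f : V → W) (hf : ∀ ⦃a b⦄, G.Adj a b → H.Reachable (f a) (f b))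
    {u v : V} (h : G.Reachable u v) : H.Reachable (f u) (f v) := by
  rw [reachable_iff_reflTransGen] at h ⊢
  exact h.lift' f fun a b hab => (reachable_iff_reflTransGen _ _).mp (hf hab)

lemma Reachable.of_sym2_eq {a b c d : V} (h : s(a, b) = s(c, d)) (hab : G.Reachable a b) :
    G.Reachable c d := by
  rcases Sym2.eq_iff.mp h with ⟨rfl, rfl⟩ | ⟨rfl, rfl⟩
  exacts [hab, hab.symm]

lemma isAcyclic_fromEdgeSet_iff {s : Set (Sym2 V)} :
    (fromEdgeSet s).IsAcyclic ↔
      ∀ ⦃u v⦄, s(u, v) ∈ s → u ≠ v →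
        ¬ (fromEdgeSet (s \ {s(u, v)})).Reachable u v := by
  simp [isAcyclic_iff_forall_adj_isBridge, isBridge_iff]

end SimpleGraph

namespace Finset

open Function

variable {ι α : Type*} [Fintype ι] [DecidableEq α]

lemma sum_powerset_biUnion_prod {R : Type*} [DecidableEq ι] [CommSemiring R] (t : ι → Finset α)
    (ht : Pairwise (Disjoint on t)) (g : ι → Finset α → R) :
    ∑ A ∈ (univ.biUnion t).powerset, ∏ i, g i (A ∩ t i) =
      ∏ i, ∑ S ∈ (t i).powerset, g i S := by
  rw [prod_univ_sum]
  refine sum_nbij' (fun A i => A ∩ t i) (fun x => univ.biUnion x) ?_ ?_ ?_ ?_ fun _ _ => rfl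
  · simp [Fintype.mem_piFinset]
  · intro x hx
    simp only [Fintype.mem_piFinset, mem_powerset] at hx
    exact mem_powerset.mpr (biUnion_mono fun i _ => hx i)
  · intro A hA
    simp only [← inter_biUnion, inter_eq_left.mpr (mem_powerset.mp (mem_coe.mp hA))]
  · intro x hx
    simp only [Fintype.mem_piFinset, mem_powerset] at hx
    funext i
    ext a
    simp only [mem_inter, mem_biUnion, mem_univ, true_and]
    refine ⟨fun ⟨⟨j, hj⟩, hi⟩ => ?_, fun h => ⟨⟨i, h⟩, hx i h⟩⟩
    obtain rfl : j = i := by_contra fun hji => disjoint_left.mp (ht hji) (hx j hj) hi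
    exact hj

lemma card_eq_sum_card_inter {t : ι → Finset α} (ht : Pairwise (Disjoint on t)) {A : Finset α}
    (hA : A ⊆ univ.biUnion t) : #A = ∑ i, #(A ∩ t i) := by
  rw [← card_biUnion fun i _ j _ hij => (ht hij).mono inter_subset_right inter_subset_right,
    ← inter_biUnion, inter_eq_left.mpr hA]

lemma sum_powerset_ite_eq_iff {R : Type*} [CommRing R] (T : Finset α) (x : R) (b : Prop)
    [Decidable b] :
    ∑ S ∈ T.powerset, (if (S = T ↔ b) then x ^ #S else 0) =
      if b then x ^ #T else (x + 1) ^ #T - x ^ #T := by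
  by_cases hb : b
  · simp [hb]
  · have hsplit : ∀ S,
        (if (S = T ↔ b) then x ^ #S else 0) = x ^ #S - if S = T then x ^ #S else 0 := by
      intro S
      split_ifs <;> simp_all
    rw [sum_congr rfl fun S _ => hsplit S, sum_sub_distrib, sum_ite_eq',
      if_pos (mem_powerset_self T), if_neg hb]
    simpa using sum_pow_mul_eq_add_pow x 1 T

lemma prod_ite_mem_of_subset {M : Type*} [CommMonoid M] {s t : Finset α} (h : t ⊆ s) (a b : M) :
    ∏ x ∈ s, (if x ∈ t then a else b) = a ^ #t * b ^ (#s - #t) := by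
  rw [prod_ite, filter_mem_eq_inter, inter_eq_right.mpr h, filter_notMem_eq_sdiff, prod_const,
    prod_const, card_sdiff_of_subset h]

end Finset

namespace Stretch

open SimpleGraph

variable {V : Type*} {G : SimpleGraph V} {k : ℕ} {p : G.edgeSet → V × V}

def pathVert (p : G.edgeSet → V × V) (k : ℕ) (e : G.edgeSet) (j : ℕ) :
    V ⊕ (G.edgeSet × Fin (k - 1)) :=
  if h₀ : j = 0 then .inl (p e).1
  else if h : j < k then .inr (e, ⟨j - 1, by omega⟩) else .inl (p e).2

def pathEdge (p : G.edgeSet → V × V) (k : ℕ) (e : G.edgeSet) (j : ℕ) :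
    Sym2 (V ⊕ (G.edgeSet × Fin (k - 1))) :=
  s(pathVert p k e j, pathVert p k e (j + 1))

@[simp] lemma pathVert_zero (e : G.edgeSet) : pathVert p k e 0 = .inl (p e).1 := by
  simp [pathVert]

@[simp] lemma pathVert_self (hk : 0 < k) (e : G.edgeSet) : pathVert p k e k = .inl (p e).2 := by
  simp [pathVert, hk.ne']

@[simp] lemma pathVert_succ (e : G.edgeSet) (i : Fin (k - 1)) :
    pathVert p k e (i + 1) = .inr (e, i) := by
  simp [pathVert, show i.val + 1 < k by omega]

lemma pathEdge_mem_edgeSet (hk : 2 ≤ k) (e : G.edgeSet) {t : ℕ} (ht : t < k) :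
    pathEdge p k e t ∈ (stretchGraph G k p).edgeSet := by
  rw [pathEdge, mem_edgeSet, stretchGraph, fromRel_adj]
  unfold pathVert
  split_ifs <;> simp_all <;> omega

lemma pathVert_ne_succ (hk : 2 ≤ k) (e : G.edgeSet) {t : ℕ} (ht : t < k) :
    pathVert p k e t ≠ pathVert p k e (t + 1) :=
  (stretchGraph G k p).ne_of_adj (pathEdge_mem_edgeSet hk e ht)

lemma mem_edgeSet_stretchGraph (hk : 2 ≤ k) {q : Sym2 (V ⊕ (G.edgeSet × Fin (k - 1)))} :
    q ∈ (stretchGraph G k p).edgeSet ↔ ∃ e, ∃ t < k, pathEdge p k e t = q := by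
  refine ⟨fun hq => ?_, fun ⟨e, t, ht, hq⟩ => hq ▸ pathEdge_mem_edgeSet hk e ht⟩
  have end_edge : ∀ (u : V) (f : G.edgeSet) (j : Fin (k - 1)),
      (j.val = 0 ∧ u = (p f).1) ∨ (j.val = k - 2 ∧ u = (p f).2) →
        ∃ e, ∃ t < k, pathEdge p k e t = s(.inl u, .inr (f, j)) := by
    rintro u f j (⟨hj, rfl⟩ | ⟨hj, rfl⟩)
    · refine ⟨f, 0, by omega, ?_⟩
      rw [pathEdge, pathVert_zero, zero_add, ← pathVert_succ f j, hj, zero_add]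
    · refine ⟨f, j + 1, by omega, ?_⟩
      rw [pathEdge, pathVert_succ, show j.val + 1 + 1 = k by omega, pathVert_self (by omega),
        Sym2.eq_swap]
  induction q using Sym2.ind with | _ x y => ?_
  rw [mem_edgeSet, stretchGraph, fromRel_adj] at hq
  rcases x with u | ⟨e, i⟩ <;> rcases y with v | ⟨f, j⟩ <;> simp at hq
  · exact end_edge u f j hq
  · rw [Sym2.eq_swap]
    exact end_edge v e i hq
  · rcases hq with ⟨-, ⟨rfl, hij⟩ | ⟨rfl, hji⟩⟩
    · refine ⟨e, i + 1, by omega, ?_⟩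
      rw [pathEdge, pathVert_succ, hij, pathVert_succ]
    · refine ⟨f, j + 1, by omega, ?_⟩
      rw [pathEdge, pathVert_succ, hji, pathVert_succ, Sym2.eq_swap]

lemma pathEdge_inj (hk : 2 ≤ k) {e f : G.edgeSet} (he : (p e).1 ≠ (p e).2) {t s : ℕ}
    (ht : t < k) (hs : s < k) (h : pathEdge p k e t = pathEdge p k f s) : e = f ∧ t = s := by
  rw [pathEdge, pathEdge, Sym2.eq_iff] at h
  unfold pathVert at h
  split_ifs at h <;> simp_all [Fin.ext_iff] <;> grind

lemma fst_ne_snd (hp : ∀ e : G.edgeSet, s((p e).1, (p e).2) = (e : Sym2 V)) (e : G.edgeSet) :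
    (p e).1 ≠ (p e).2 := by
  have := G.not_isDiag_of_mem_edgeSet e.2
  rwa [← hp e, Sym2.mk_isDiag_iff] at this

lemma reachable_pathVert (hk : 2 ≤ k) {C : Set (Sym2 (V ⊕ (G.edgeSet × Fin (k - 1))))}
    {e : G.edgeSet} {a b : ℕ} (hab : a ≤ b) (hb : b ≤ k)
    (hC : ∀ t, a ≤ t → t < b → pathEdge p k e t ∈ C) :
    (fromEdgeSet C).Reachable (pathVert p k e a) (pathVert p k e b) := by
  induction b, hab using Nat.le_induction with
  | base => rfl
  | succ b hab ih =>
    refine (ih (by omega) fun t h1 h2 => hC t h1 (by omega)).trans (Adj.reachable ?_)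
    exact (fromEdgeSet_adj _).mpr ⟨hC b hab (by omega), pathVert_ne_succ hk e (by omega)⟩

def fullSet (p : G.edgeSet → V × V) (k : ℕ)
    (C : Set (Sym2 (V ⊕ (G.edgeSet × Fin (k - 1))))) : Set (Sym2 V) :=
  (↑) '' {e : G.edgeSet | ∀ t < k, pathEdge p k e t ∈ C}

variable {C : Set (Sym2 (V ⊕ (G.edgeSet × Fin (k - 1))))}

lemma reachable_inl_of_reachable_fullSet (hk : 2 ≤ k)
    (hp : ∀ e : G.edgeSet, s((p e).1, (p e).2) = (e : Sym2 V)) {u v : V}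
    (h : (fromEdgeSet (fullSet p k C)).Reachable u v) :
    (fromEdgeSet C).Reachable (.inl u) (.inl v) := by
  refine h.lift _ fun a b hab => ?_
  obtain ⟨⟨e, hfull, hab⟩, -⟩ := (fromEdgeSet_adj _).mp hab
  have hpath := reachable_pathVert hk (p := p) (e := e) (C := C) k.zero_le le_rfl
    fun t _ ht => hfull t ht
  rw [pathVert_zero, pathVert_self (by omega)] at hpath
  exact hpath.of_sym2_eq (by simpa using Sym2.eq_iff.mp ((hp e).trans hab))

lemma fullSet_diff_subset (hk : 2 ≤ k) (hne : ∀ e : G.edgeSet, (p e).1 ≠ (p e).2)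
    (e : G.edgeSet) {t : ℕ} (ht : t < k) :
    fullSet p k C \ {(e : Sym2 V)} ⊆ fullSet p k (C \ {pathEdge p k e t}) := by
  rintro _ ⟨⟨f, hfull, rfl⟩, hfe⟩
  refine ⟨f, fun s hs => ⟨hfull s hs, fun hst => hfe ?_⟩, rfl⟩
  rw [(pathEdge_inj hk (hne f) hs ht hst).1]
  rfl

theorem isAcyclic_fullSet_of_isAcyclic (hk : 2 ≤ k)
    (hp : ∀ e : G.edgeSet, s((p e).1, (p e).2) = (e : Sym2 V))
    (h : (fromEdgeSet C).IsAcyclic) : (fromEdgeSet (fullSet p k C)).IsAcyclic := by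
  rw [isAcyclic_fromEdgeSet_iff] at h ⊢
  rintro u v ⟨e, hfull, he⟩ - huv
  rw [← he] at huv
  have hsub := fullSet_diff_subset (C := C) hk (fst_ne_snd hp) e (zero_lt_two.trans_le hk)
  have hends := reachable_inl_of_reachable_fullSet hk hp
    ((huv.mono (fromEdgeSet_mono hsub)).of_sym2_eq ((hp e).trans he).symm)
  rw [← pathVert_zero, ← pathVert_self (by omega : 0 < k)] at hends
  have hrest := reachable_pathVert hk (p := p) (e := e) (C := C \ {pathEdge p k e 0})
    (a := 1) (b := k) (by omega) le_rfl fun t h1 h2 => ⟨hfull t h2, fun h0 => by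
      have := (pathEdge_inj hk (fst_ne_snd hp e) h2 (by omega) h0).2
      omega⟩
  exact h (hfull 0 (by omega)) (pathVert_ne_succ hk e (by omega)) (hends.trans hrest.symm)

noncomputable def project (p : G.edgeSet → V × V) (k : ℕ)
    (C : Set (Sym2 (V ⊕ (G.edgeSet × Fin (k - 1))))) : V ⊕ (G.edgeSet × Fin (k - 1)) → V
  | .inl v => v
  | .inr (f, i) => if ∀ t ≤ i.val, pathEdge p k f t ∈ C then (p f).1 else (p f).2

lemma project_pathVert (f : G.edgeSet) {j : ℕ} (hj : j < k) :
    project p k C (pathVert p k f j) =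
      if ∀ t < j, pathEdge p k f t ∈ C then (p f).1 else (p f).2 := by
  rcases j with _ | j
  · simp [project]
  · rw [pathVert_succ f ⟨j, by omega⟩]
    simp [project]

lemma reachable_project_pathVert (hp : ∀ e : G.edgeSet, s((p e).1, (p e).2) = (e : Sym2 V))
    {f : G.edgeSet} {t : ℕ} (ht : t < k) (hf : pathEdge p k f t ∈ C) :
    (fromEdgeSet (fullSet p k C)).Reachable (project p k C (pathVert p k f t))
      (project p k C (pathVert p k f (t + 1))) := by
  have hsucc : (∀ s < t + 1, pathEdge p k f s ∈ C) ↔ ∀ s < t, pathEdge p k f s ∈ C :=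
    Nat.forall_lt_succ_right.trans (and_iff_left hf)
  rw [project_pathVert f ht]
  rcases (show t + 1 < k ∨ t + 1 = k by omega) with htk | htk
  · rw [project_pathVert f htk]
    simp only [hsucc]
    rfl
  · rw [htk, pathVert_self (by omega)]
    split_ifs with hbefore
    · have hfull : ∀ s < k, pathEdge p k f s ∈ C :=
        fun s hs => hsucc.mpr hbefore s (htk ▸ hs)
      exact Adj.reachable <|
        (fromEdgeSet_adj _).mpr ⟨⟨f, hfull, (hp f).symm⟩, fst_ne_snd hp f⟩
    · rfl

lemma reachable_project (hk : 2 ≤ k)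
    (hp : ∀ e : G.edgeSet, s((p e).1, (p e).2) = (e : Sym2 V))
    (hC : C ⊆ (stretchGraph G k p).edgeSet) {x y : V ⊕ (G.edgeSet × Fin (k - 1))}
    (h : (fromEdgeSet C).Reachable x y) :
    (fromEdgeSet (fullSet p k C)).Reachable (project p k C x) (project p k C y) := by
  refine h.lift _ fun a b hab => ?_
  have hab := ((fromEdgeSet_adj _).mp hab).1
  obtain ⟨f, t, ht, hft⟩ := (mem_edgeSet_stretchGraph hk).mp (hC hab)
  rcases Sym2.eq_iff.mp hft with ⟨rfl, rfl⟩ | ⟨rfl, rfl⟩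
  · exact reachable_project_pathVert hp ht (hft ▸ hab)
  · exact (reachable_project_pathVert hp ht (hft ▸ hab)).symm

def InSegment (e : G.edgeSet) (a b : ℕ) : V ⊕ (G.edgeSet × Fin (k - 1)) → Prop
  | .inl _ => False
  | .inr (f, i) => f = e ∧ a < i.val + 1 ∧ i.val + 1 ≤ b

lemma inSegment_pathVert (e f : G.edgeSet) {a b j : ℕ} (hb : b < k) (hj : j ≤ k) :
    InSegment e a b (pathVert p k f j) ↔ f = e ∧ a < j ∧ j ≤ b := by
  rcases j with _ | j
  · simp [InSegment]
  rcases (show j + 1 < k ∨ j + 1 = k by omega) with hjk | rfl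
  · rw [pathVert_succ f ⟨j, by omega⟩]
    rfl
  · simp [InSegment]
    omega

lemma inSegment_iff_of_reachable (hk : 2 ≤ k) (hC : C ⊆ (stretchGraph G k p).edgeSet)
    {e : G.edgeSet} {a b : ℕ} (hb : b < k) (ha : pathEdge p k e a ∉ C)
    (hb' : pathEdge p k e b ∉ C) {x y : V ⊕ (G.edgeSet × Fin (k - 1))}
    (h : (fromEdgeSet C).Reachable x y) : InSegment e a b x ↔ InSegment e a b y := by
  suffices (⊥ : SimpleGraph Prop).Reachable (InSegment e a b x) (InSegment e a b y) by
    rw [reachable_bot.mp this]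
  refine h.lift _ fun x y hxy => reachable_bot.mpr ?_
  have hxy := ((fromEdgeSet_adj _).mp hxy).1
  obtain ⟨f, t, ht, hft⟩ := (mem_edgeSet_stretchGraph hk).mp (hC hxy)
  suffices InSegment e a b (pathVert p k f t) = InSegment e a b (pathVert p k f (t + 1)) by
    rcases Sym2.eq_iff.mp hft with ⟨rfl, rfl⟩ | ⟨rfl, rfl⟩
    exacts [this, this.symm]
  rw [inSegment_pathVert e f hb (by omega), inSegment_pathVert e f hb (by omega), eq_iff_iff]
  constructor
  · rintro ⟨rfl, h1, h2⟩
    have : t ≠ b := fun htb => hb' (htb ▸ hft ▸ hxy)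
    exact ⟨rfl, by omega, by omega⟩
  · rintro ⟨rfl, h1, h2⟩
    have : t ≠ a := fun hta => ha (hta ▸ hft ▸ hxy)
    exact ⟨rfl, by omega, by omega⟩

lemma not_reachable_pathVert_succ_of_notMem (hk : 2 ≤ k)
    (hC : C ⊆ (stretchGraph G k p).edgeSet) {e : G.edgeSet} {s t : ℕ} (hs : s < k) (ht : t < k)
    (hst : s ≠ t) (hsC : pathEdge p k e s ∉ C) (htC : pathEdge p k e t ∉ C) :
    ¬ (fromEdgeSet C).Reachable (pathVert p k e t) (pathVert p k e (t + 1)) := by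
  intro h
  rcases hst.lt_or_gt with hlt | hlt
  · have hseg := inSegment_iff_of_reachable hk hC ht hsC htC h
    rw [inSegment_pathVert e e ht (by omega), inSegment_pathVert e e ht (by omega)] at hseg
    have := (hseg.mp ⟨rfl, hlt, le_rfl⟩).2.2
    omega
  · have hseg := inSegment_iff_of_reachable hk hC hs htC hsC h
    rw [inSegment_pathVert e e hs (by omega), inSegment_pathVert e e hs (by omega)] at hseg
    exact (hseg.mpr ⟨rfl, by omega, hlt⟩).2.1.false

lemma not_reachable_pathVert_succ_of_forall_mem (hk : 2 ≤ k)
    (hp : ∀ e : G.edgeSet, s((p e).1, (p e).2) = (e : Sym2 V))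
    (hC : C ⊆ (stretchGraph G k p).edgeSet) (hfull : (fromEdgeSet (fullSet p k C)).IsAcyclic)
    {e : G.edgeSet} (hpath : ∀ s < k, pathEdge p k e s ∈ C) {t : ℕ} (ht : t < k) :
    ¬ (fromEdgeSet (C \ {pathEdge p k e t})).Reachable
      (pathVert p k e t) (pathVert p k e (t + 1)) := by
  set D := C \ {pathEdge p k e t}
  have hqD : pathEdge p k e t ∉ D := fun h => h.2 rfl
  have hbefore : ∀ s < t, pathEdge p k e s ∈ D := fun s hs => ⟨hpath s (by omega), fun hst =>
    (pathEdge_inj hk (fst_ne_snd hp e) (by omega) ht hst).2 ▸ hs |>.false⟩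
  have h1 : project p k D (pathVert p k e t) = (p e).1 := by
    rw [project_pathVert e ht, if_pos hbefore]
  have h2 : project p k D (pathVert p k e (t + 1)) = (p e).2 := by
    rcases (show t + 1 < k ∨ t + 1 = k by omega) with htk | htk
    · rw [project_pathVert e htk, if_neg fun h => hqD (h t (by omega))]
    · rw [htk, pathVert_self (by omega), project]
  have hsub : fullSet p k D ⊆ fullSet p k C \ {s((p e).1, (p e).2)} := by
    rintro _ ⟨f, hf, rfl⟩
    refine ⟨⟨f, fun s hs => (hf s hs).1, rfl⟩, fun hfe => hqD ?_⟩
    rw [Set.mem_singleton_iff, hp e] at hfe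
    exact Subtype.ext hfe ▸ hf t ht
  intro h
  have hends := reachable_project hk hp (Set.sdiff_subset.trans hC) h
  rw [h1, h2] at hends
  exact isAcyclic_fromEdgeSet_iff.mp hfull ⟨e, hpath, (hp e).symm⟩ (fst_ne_snd hp e)
    (hends.mono (fromEdgeSet_mono hsub))

theorem isAcyclic_iff_isAcyclic_fullSet (hk : 2 ≤ k)
    (hp : ∀ e : G.edgeSet, s((p e).1, (p e).2) = (e : Sym2 V))
    (hC : C ⊆ (stretchGraph G k p).edgeSet) :
    (fromEdgeSet C).IsAcyclic ↔ (fromEdgeSet (fullSet p k C)).IsAcyclic := by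
  refine ⟨isAcyclic_fullSet_of_isAcyclic hk hp,
    fun h => isAcyclic_fromEdgeSet_iff.mpr fun x y hxy _ hreach => ?_⟩
  obtain ⟨e, t, ht, hq⟩ := (mem_edgeSet_stretchGraph hk).mp (hC hxy)
  rw [← hq] at hreach hxy
  replace hreach := hreach.of_sym2_eq hq.symm
  by_cases hpath : ∀ s < k, pathEdge p k e s ∈ C
  · exact not_reachable_pathVert_succ_of_forall_mem hk hp hC h hpath ht hreach
  · obtain ⟨s, hs, hsC⟩ := not_forall₂.mp hpath
    exact not_reachable_pathVert_succ_of_notMem (C := C \ {pathEdge p k e t}) hk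
      (Set.sdiff_subset.trans hC) hs ht
      (fun hst => hsC (hst ▸ hxy)) (fun h => hsC h.1) (fun h => h.2 rfl) hreach

noncomputable def pathEdges (p : G.edgeSet → V × V) (k : ℕ) (e : G.edgeSet) :
    Finset (Sym2 (V ⊕ (G.edgeSet × Fin (k - 1)))) :=
  (Finset.range k).image (pathEdge p k e)

lemma mem_pathEdges {e : G.edgeSet} {q : Sym2 (V ⊕ (G.edgeSet × Fin (k - 1)))} :
    q ∈ pathEdges p k e ↔ ∃ t < k, pathEdge p k e t = q := by
  simp [pathEdges]

lemma card_pathEdges (hk : 2 ≤ k) {e : G.edgeSet} (he : (p e).1 ≠ (p e).2) :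
    (pathEdges p k e).card = k := by
  rw [pathEdges, Finset.card_image_of_injOn, Finset.card_range]
  exact fun t ht s hs h =>
    (pathEdge_inj hk he (Finset.mem_range.mp ht) (Finset.mem_range.mp hs) h).2

lemma pairwise_disjoint_pathEdges (hk : 2 ≤ k) (hne : ∀ e : G.edgeSet, (p e).1 ≠ (p e).2) :
    Pairwise (Function.onFun Disjoint (pathEdges p k)) := by
  intro e f hef
  rw [Function.onFun, Finset.disjoint_left]
  rintro _ he hf
  obtain ⟨t, ht, rfl⟩ := mem_pathEdges.mp he
  obtain ⟨s, hs, hst⟩ := mem_pathEdges.mp hf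
  exact hef (pathEdge_inj hk (hne f) hs ht hst).1.symm

section Finite

open Finset

variable [Fintype V]

lemma edgeFinset_stretchGraph (hk : 2 ≤ k) :
    (stretchGraph G k p).edgeFinset = univ.biUnion (pathEdges p k) := by
  ext q
  simp [mem_edgeSet_stretchGraph hk, mem_pathEdges]

noncomputable def fullEdges (p : G.edgeSet → V × V) (k : ℕ)
    (A : Finset (Sym2 (V ⊕ (G.edgeSet × Fin (k - 1))))) : Finset (Sym2 V) :=
  (univ.filter fun e : G.edgeSet => pathEdges p k e ⊆ A).map (Function.Embedding.subtype _)

variable {A : Finset (Sym2 (V ⊕ (G.edgeSet × Fin (k - 1))))}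

lemma coe_fullEdges : (fullEdges p k A : Set (Sym2 V)) = fullSet p k A := by
  ext q
  simp [fullEdges, fullSet, mem_pathEdges, subset_iff]

lemma fullEdges_subset : fullEdges p k A ⊆ G.edgeFinset := by
  intro q
  simp +contextual [fullEdges]

lemma coe_mem_fullEdges {e : G.edgeSet} :
    (e : Sym2 V) ∈ fullEdges p k A ↔ pathEdges p k e ⊆ A := by
  simp [fullEdges]

lemma fullEdges_eq_iff {B : Finset (Sym2 V)} (hB : B ⊆ G.edgeFinset) :
    fullEdges p k A = B ↔ ∀ e : G.edgeSet, (pathEdges p k e ⊆ A ↔ (e : Sym2 V) ∈ B) := by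
  simp_rw [← coe_mem_fullEdges]
  refine ⟨fun h e => h ▸ Iff.rfl, fun h => ?_⟩
  ext q
  by_cases hq : q ∈ G.edgeSet
  · exact h ⟨q, hq⟩
  · exact iff_of_false (fun h' => hq (mem_edgeFinset.mp (fullEdges_subset h')))
      fun h' => hq (mem_edgeFinset.mp (hB h'))

theorem isForestEdgeSet_iff (hk : 2 ≤ k)
    (hp : ∀ e : G.edgeSet, s((p e).1, (p e).2) = (e : Sym2 V))
    (hA : A ⊆ (stretchGraph G k p).edgeFinset) :
    IsForestEdgeSet A ↔ IsForestEdgeSet (fullEdges p k A) := by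
  rw [IsForestEdgeSet, IsForestEdgeSet, coe_fullEdges]
  exact isAcyclic_iff_isAcyclic_fullSet hk hp fun q hq => mem_edgeFinset.mp (hA hq)

theorem sum_filter_fullEdges_eq {R : Type*} [CommRing R] (hk : 2 ≤ k)
    (hne : ∀ e : G.edgeSet, (p e).1 ≠ (p e).2) (w : R) {B : Finset (Sym2 V)}
    (hB : B ⊆ G.edgeFinset) :
    ∑ A ∈ (stretchGraph G k p).edgeFinset.powerset with fullEdges p k A = B, w ^ #A =
      (w ^ k) ^ #B * ((w + 1) ^ k - w ^ k) ^ (#G.edgeFinset - #B) := by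
  set g : G.edgeSet → Finset (Sym2 (V ⊕ (G.edgeSet × Fin (k - 1)))) → R :=
    fun e S => if (S = pathEdges p k e ↔ (e : Sym2 V) ∈ B) then w ^ #S else 0
  have hterm : ∀ A ∈ (stretchGraph G k p).edgeFinset.powerset,
      (if fullEdges p k A = B then w ^ #A else 0) = ∏ e, g e (A ∩ pathEdges p k e) := by
    intro A hA
    rw [edgeFinset_stretchGraph hk, mem_powerset] at hA
    simp only [g, inter_eq_right, fullEdges_eq_iff hB]
    split_ifs with h
    · rw [prod_congr rfl fun e _ => if_pos (h e), prod_pow_eq_pow_sum,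
        ← card_eq_sum_card_inter (pairwise_disjoint_pathEdges hk hne) hA]
    · obtain ⟨e, he⟩ := not_forall.mp h
      exact (prod_eq_zero (mem_univ e) (if_neg he)).symm
  rw [sum_filter, sum_congr rfl hterm, edgeFinset_stretchGraph hk,
    sum_powerset_biUnion_prod _ (pairwise_disjoint_pathEdges hk hne)]
  simp only [g, sum_powerset_ite_eq_iff, card_pathEdges hk (hne _)]
  rw [← prod_ite_mem_of_subset hB]
  exact (prod_subtype _ (fun _ => mem_edgeFinset) (fun q => if q ∈ B then w ^ k else _)).symm

theorem sum_filter_isForestEdgeSet_eq {R : Type*} [CommRing R] (hk : 2 ≤ k)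
    (hp : ∀ e : G.edgeSet, s((p e).1, (p e).2) = (e : Sym2 V)) (w : R) :
    ∑ A ∈ (stretchGraph G k p).edgeFinset.powerset with IsForestEdgeSet A, w ^ #A =
      ∑ B ∈ G.edgeFinset.powerset with IsForestEdgeSet B,
        (w ^ k) ^ #B * ((w + 1) ^ k - w ^ k) ^ (#G.edgeFinset - #B) := by
  have hmaps : ∀ A ∈ (stretchGraph G k p).edgeFinset.powerset.filter
      (fun A => IsForestEdgeSet (fullEdges p k A)),
      fullEdges p k A ∈ G.edgeFinset.powerset.filter IsForestEdgeSet := fun A hA =>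
    mem_filter.mpr ⟨mem_powerset.mpr fullEdges_subset, (mem_filter.mp hA).2⟩
  rw [filter_congr fun A hA => isForestEdgeSet_iff hk hp (mem_powerset.mp hA),
    ← sum_fiberwise_of_maps_to hmaps]
  refine sum_congr rfl fun B hB => ?_
  obtain ⟨hBE, hBforest⟩ := mem_filter.mp hB
  rw [filter_filter, filter_congr fun A _ => and_iff_right_of_imp fun h => h ▸ hBforest,
    sum_filter_fullEdges_eq hk (fst_ne_snd hp) w (mem_powerset.mp hBE)]

end Finite

end Stretch

/-- **The forest polynomial under a `k`-stretch.**  Let `G` be a finite simple graph with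
`m` edges, `k ≥ 2`, and let `G'` be the `k`-stretch of `G`.  If `(w+1)^k − w^k ≠ 0`, then
`F(G'; w) = ((w+1)^k − w^k)^m · F(G; w^k / ((w+1)^k − w^k))`, where
`F(H; x) = Σ_{A ∈ 𝔽(H)} x^{|A|}` is the univariate forest polynomial. -/
theorem forest_polynomial_stretch {V : Type*} [Fintype V] (G : SimpleGraph V)
    (k : ℕ) (hk : 2 ≤ k) (p : G.edgeSet → V × V)
    (hp : ∀ e : G.edgeSet, s((p e).1, (p e).2) = (e : Sym2 V))
    (w : ℝ) (hw : (w + 1) ^ k - w ^ k ≠ 0) :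
    ∑ A' ∈ (stretchGraph G k p).edgeFinset.powerset.filter IsForestEdgeSet, w ^ A'.card
    = ((w + 1) ^ k - w ^ k) ^ G.edgeFinset.card *
        ∑ A ∈ G.edgeFinset.powerset.filter IsForestEdgeSet,
          (w ^ k / ((w + 1) ^ k - w ^ k)) ^ A.card := by
  rw [Stretch.sum_filter_isForestEdgeSet_eq hk hp w, Finset.mul_sum]
  refine Finset.sum_congr rfl fun B hB => ?_
  have hBE := Finset.mem_powerset.mp (Finset.mem_filter.mp hB).1
  rw [div_pow, pow_sub₀ _ hw (Finset.card_le_card hBE)]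
  field_simp
end

section
/- Let G be a finite bipartite simple graph with bipartition of its vertex set into parts V and U (every edge has one endpoint in V and one in U). Then the number of independent sets of G equals the number of Boolean assignments σ : V ∪ U → {false, true} such that for every edge {v,u} of G with v ∈ V and u ∈ U, σ(v) = true implies σ(u) = true. -/
/-! Complementing the indicator of a vertex set outside `V` turns the
independence condition `¬ (v ∈ I ∧ u ∈ I)` on each edge into the implication `σ v → σ u`, and
this complementation is a bijection between vertex sets and assignments. -/

open scoped Classical

open Finset

namespace SimpleGraph

variable {W : Type*}

theorem isIndepSet_coe_iff {G : SimpleGraph W} {I : Finset W} :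
    G.IsIndepSet (I : Set W) ↔ ∀ x ∈ I, ∀ y ∈ I, ¬G.Adj x y :=
  ⟨fun hI _ hx _ hy hxy => hI hx hy hxy.ne hxy, fun hI x hx y hy _ => hI x hx y hy⟩

variable {G : SimpleGraph W} {s t : Set W}

theorem IsBipartiteWith.isIndepSet_iff_forall_adj_mem_left (h : G.IsBipartiteWith s t)
    {I : Set W} :
    G.IsIndepSet I ↔ ∀ x y, G.Adj x y → x ∈ s → y ∈ t → x ∈ I → y ∉ I := by
  refine ⟨fun hI x y hxy _ _ hx hy => hI hx hy hxy.ne hxy, fun hI x hx y hy _ hxy => ?_⟩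
  rcases h.mem_of_adj hxy with ⟨hxs, hyt⟩ | ⟨hxt, hys⟩
  · exact hI x y hxy hxs hyt hx hy
  · exact hI y x hxy.symm hys hxt hy hx

variable [Fintype W] [DecidableEq W] [DecidablePred (· ∈ s)]

variable (s) in
def finsetEquivAssignment : Finset W ≃ (W → Bool) where
  toFun I x := decide (x ∈ I) == decide (x ∈ s)
  invFun σ := {x | (σ x == decide (x ∈ s)) = true}
  left_inv I := by ext x; simp
  right_inv σ := by funext x; by_cases hx : x ∈ s <;> simp [hx]

theorem finsetEquivAssignment_apply_of_mem {x : W} (hx : x ∈ s) (I : Finset W) :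
    finsetEquivAssignment s I x = decide (x ∈ I) := by
  simp [finsetEquivAssignment, hx]

theorem finsetEquivAssignment_apply_of_notMem {x : W} (hx : x ∉ s) (I : Finset W) :
    finsetEquivAssignment s I x = !decide (x ∈ I) := by
  simp [finsetEquivAssignment, hx]

theorem IsBipartiteWith.isIndepSet_iff_finsetEquivAssignment (h : G.IsBipartiteWith s t)
    (I : Finset W) :
    G.IsIndepSet (I : Set W) ↔ ∀ x y, G.Adj x y → x ∈ s → y ∈ t →
      finsetEquivAssignment s I x = true → finsetEquivAssignment s I y = true := by
  rw [h.isIndepSet_iff_forall_adj_mem_left]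
  refine forall₄_congr fun x y _ hx => forall_congr' fun hy => ?_
  rw [finsetEquivAssignment_apply_of_mem hx,
    finsetEquivAssignment_apply_of_notMem (h.disjoint.notMem_of_mem_right hy)]
  simp

theorem IsBipartiteWith.card_isIndepSet_eq_card_imp_assignments (h : G.IsBipartiteWith s t) :
    #{I : Finset W | G.IsIndepSet (I : Set W)} =
      #{σ : W → Bool | ∀ x y, G.Adj x y → x ∈ s → y ∈ t → σ x = true → σ y = true} :=
  card_equiv (finsetEquivAssignment s) fun I => by simp [h.isIndepSet_iff_finsetEquivAssignment]

end SimpleGraph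

theorem card_independent_sets_eq_card_imp2sat_assignments_general {W : Type*} [Fintype W]
    (G : SimpleGraph W) (SV SU : Finset W)
    (hdisj : Disjoint SV SU)
    (hbip : ∀ x y, G.Adj x y → (x ∈ SV ∧ y ∈ SU) ∨ (x ∈ SU ∧ y ∈ SV)) :
    ((Finset.univ : Finset (Finset W)).filter
        (fun I => ∀ x ∈ I, ∀ y ∈ I, ¬ G.Adj x y)).card
    = ((Finset.univ : Finset (W → Bool)).filter
        (fun σ => ∀ x y, G.Adj x y → x ∈ SV → y ∈ SU →
          (σ x = true → σ y = true))).card := by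
  have hG : G.IsBipartiteWith SV SU := ⟨Finset.disjoint_coe.2 hdisj, fun x y hxy => hbip x y hxy⟩
  simpa [SimpleGraph.isIndepSet_coe_iff] using hG.card_isIndepSet_eq_card_imp_assignments

/-- Let `G` be a finite bipartite simple graph with bipartition `(SV, SU)` of its vertex
set (every edge has one endpoint in `SV` and one in `SU`).  Then the number of independent
sets of `G` equals the number of Boolean assignments `σ` on the vertices such that for
every edge `{v, u}` with `v ∈ SV` and `u ∈ SU`, `σ v = true` implies `σ u = true`. -/
theorem card_independent_sets_eq_card_imp2sat_assignments {W : Type*} [Fintype W]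
    (G : SimpleGraph W) (SV SU : Finset W)
    (hdisj : Disjoint SV SU) (hcover : SV ∪ SU = Finset.univ)
    (hbip : ∀ x y, G.Adj x y → (x ∈ SV ∧ y ∈ SU) ∨ (x ∈ SU ∧ y ∈ SV)) :
    ((Finset.univ : Finset (Finset W)).filter
        (fun I => ∀ x ∈ I, ∀ y ∈ I, ¬ G.Adj x y)).card
    = ((Finset.univ : Finset (W → Bool)).filter
        (fun σ => ∀ x y, G.Adj x y → x ∈ SV → y ∈ SU →
          (σ x = true → σ y = true))).card :=
  card_independent_sets_eq_card_imp2sat_assignments_general G SV SU hdisj hbip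
end
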